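/- Let U₁ be a finite index set and for each i ∈ U₁ let σᵢ > 0. Among all vectors (πᵢ)_{i∈U₁} with 0 < πᵢ ≤ 1 and Σ_{i∈U₁} πᵢ = n (where n ≤ Σσᵢ/max σᵢ so that the proportional solution is feasible), the choice πᵢ = n·σᵢ/Σ_{j∈U₁}σⱼ minimizes the anticipated-variance functional Σ_{i∈U₁} σᵢ²(1/πᵢ − 1). -/

import Mathlib

open Finset

/-- Isaki–Fuller optimal allocation: among all feasible inclusion probabilities
`π` with `0 < π i ≤ 1` and `∑ π i = n`, the choice `π i = n * σ i / ∑ σ j`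
minimizes the anticipated variance `∑ σ i ^ 2 * (1 / π i - 1)`. -/
theorem isaki_fuller_optimal_allocation {ι : Type*} (U₁ : Finset ι) (hU : U₁.Nonempty)
    (σ : ι → ℝ) (hσ : ∀ i ∈ U₁, 0 < σ i) (n : ℝ) (hn : 0 < n)
    (hfeas : ∀ i ∈ U₁, n * σ i / (∑ j ∈ U₁, σ j) ≤ 1)
    (π : ι → ℝ) (hπpos : ∀ i ∈ U₁, 0 < π i) (hπle : ∀ i ∈ U₁, π i ≤ 1)
    (hπsum : ∑ i ∈ U₁, π i = n) :
    ∑ i ∈ U₁, (σ i) ^ 2 * (1 / (n * σ i / (∑ j ∈ U₁, σ j)) - 1) ≤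
      ∑ i ∈ U₁, (σ i) ^ 2 * (1 / π i - 1) := by
  set S := ∑ j ∈ U₁, σ j with hS
  have hSpos : 0 < S := Finset.sum_pos hσ hU
  have hL : ∑ i ∈ U₁, (σ i) ^ 2 * (1 / (n * σ i / S) - 1)
      = S ^ 2 / n - ∑ i ∈ U₁, (σ i) ^ 2 := by
    have : ∀ i ∈ U₁, (σ i) ^ 2 * (1 / (n * σ i / S) - 1)
        = σ i * (S / n) - (σ i) ^ 2 := by
      intro i hi
      have hσi := hσ i hi
      field_simp
    rw [Finset.sum_congr rfl this, Finset.sum_sub_distrib, ← Finset.sum_mul, ← hS]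
    ring
  have hR : ∑ i ∈ U₁, (σ i) ^ 2 * (1 / π i - 1)
      = (∑ i ∈ U₁, (σ i) ^ 2 / π i) - ∑ i ∈ U₁, (σ i) ^ 2 := by
    rw [← Finset.sum_sub_distrib]
    refine Finset.sum_congr rfl fun i hi => ?_
    have := (hπpos i hi).ne'
    field_simp
  rw [hL, hR]
  have key : S ^ 2 / n ≤ ∑ i ∈ U₁, (σ i) ^ 2 / π i := by
    have := Finset.sq_sum_div_le_sum_sq_div U₁ σ hπpos
    rwa [hπsum] at this
  linarith
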